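/- Statistical proofs of the Kochen–Specker theorem with unentangled measurements imply Bell inequality violation: let ρ be a density operator on (ℂ²)^{⊗n} and let S be a finite set of product unit vectors in (ℂ²)^{⊗n}. Suppose the probabilistic model p(ψ) = ⟨ψ, ρψ⟩ on S is not classical, i.e., p is not a convex combination of maps c : S → {0,1} satisfying Σ_{ψ ∈ B} c(ψ) = 1 for every orthonormal basis B of (ℂ²)^{⊗n} contained in S. Then ρ violates a Bell inequality with local projective measurements: there exist, for each party r ∈ {1, …, n}, a finite family of orthonormal bases (B_r^{x})_{x ∈ X_r} of ℂ², with B_r^{x} = {φ^{r,x}_0, φ^{r,x}_1}, such that the behaviour p(a₁…aₙ | x₁…xₙ) = ⟨⊗_{r=1}^{n} φ^{r,x_r}_{a_r}, ρ (⊗_{r=1}^{n} φ^{r,x_r}_{a_r})⟩ (for aᵣ ∈ {0,1}, xᵣ ∈ X_r) does not lie in the convex hull of the local deterministic behaviours, i.e., of the behaviours of the form p(a₁…aₙ | x₁…xₙ) = ∏_{r=1}^{n} d_r(a_r | x_r) where each d_r(·|x) : {0,1} → {0,1} satisfies d_r(0|x) + d_r(1|x) = 1 for every x ∈ X_r. 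-/

import Mathlib

open scoped InnerProductSpace
open MeasureTheory

noncomputable section

abbrev Qubit : Type := EuclideanSpace ℂ (Fin 2)
abbrev NQubit (n : ℕ) : Type := EuclideanSpace ℂ (Fin n → Fin 2)

/-- The product vector `ψ₁ ⊗ ⋯ ⊗ ψₙ` in `(ℂ²)^{⊗n}`, modelled concretely as
`EuclideanSpace ℂ (Fin n → Fin 2)`; its inner products satisfy
`⟨tens ψ, tens χ⟩ = ∏ j, ⟨ψ j, χ j⟩`. -/
noncomputable def tens {n : ℕ} (ψ : Fin n → Qubit) : NQubit n :=
  WithLp.toLp 2 (fun f => ∏ j, ψ j (f j))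

/-- A vector of `(ℂ²)^{⊗n}` is a product vector if it is of the form `ψ₁ ⊗ ⋯ ⊗ ψₙ`. -/
def IsProduct {n : ℕ} (v : NQubit n) : Prop := ∃ ψ : Fin n → Qubit, v = tens ψ

/-- A finite set of vectors forming an orthonormal basis of `H`. -/
def IsONBasis {H : Type*} [NormedAddCommGroup H] [InnerProductSpace ℂ H]
    (B : Finset H) : Prop :=
  Orthonormal ℂ (fun v : B => (v : H)) ∧ Submodule.span ℂ (B : Set H) = ⊤

/-- A KS-colouring of a set `S` of unit vectors: a `{0,1}`-valued map (modelled as a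
predicate, `c v` meaning value `1`) such that every orthonormal basis contained in `S`
has exactly one element of value `1`, and no two mutually orthogonal elements of `S`
both have value `1`. -/
def IsKSColouring {H : Type*} [NormedAddCommGroup H] [InnerProductSpace ℂ H]
    (S : Set H) (c : H → Prop) : Prop :=
  (∀ B : Finset H, ↑B ⊆ S → IsONBasis B → ∃! v, v ∈ B ∧ c v) ∧
  (∀ ψ ∈ S, ∀ χ ∈ S, ⟪ψ, χ⟫_ℂ = 0 → ¬(c ψ ∧ c χ))

/-!
Write every `v ∈ S` as a product `ψ₁ ⊗ ⋯ ⊗ ψₙ`. For each party, group the factors `ψᵣ` by the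
unordered pair of lines `{ℂψᵣ, (ℂψᵣ)^⊥}`: in `ℂ²` two orthogonal nonzero vectors give the
same pair, so each group is measured in a single basis in which each member of the group is, up
to a scalar, one of the two outcomes. The behaviour of these bases then reproduces `⟨v, ρ v⟩` for
every `v ∈ S`.

A local deterministic strategy assigns to `v ∈ S` the product of its local outcome values. Two
orthogonal vectors of `S` have orthogonal factors for some party, i.e. different outcomes of the
same setting, so at most one of them gets value `1`; hence each assignment sums to at most `1` on
a basis inside `S`. The model sums to `tr ρ = 1` there, so every assignment of positive weight is
a KS colouring, and a local model for the behaviour would be a classical model for `p`.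
-/

open Finset NormedSpace Submodule

lemma span_normalize {V : Type*} [NormedAddCommGroup V] [NormedSpace ℂ V] (x : V) :
    ℂ ∙ normalize x = ℂ ∙ x := by
  rcases eq_or_ne x 0 with rfl | hx
  · simp
  rw [NormedSpace.normalize, RCLike.real_smul_eq_coe_smul (K := ℂ), span_singleton_smul_eq]
  simpa using hx

lemma inner_normalize_eq_zero {V : Type*} [NormedAddCommGroup V] [InnerProductSpace ℂ V]
    {x y : V} (h : ⟪x, y⟫_ℂ = 0) : ⟪normalize x, normalize y⟫_ℂ = 0 := by
  simp only [NormedSpace.normalize, RCLike.real_smul_eq_coe_smul (K := ℂ), inner_smul_left,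
    inner_smul_right, h, mul_zero]

lemma inner_ne_zero_of_span_singleton_eq {V : Type*} [NormedAddCommGroup V]
    [InnerProductSpace ℂ V] {x y : V} (hx : x ≠ 0) (h : ℂ ∙ x = ℂ ∙ y) : ⟪x, y⟫_ℂ ≠ 0 := by
  obtain ⟨c, rfl⟩ := mem_span_singleton.mp (h ▸ mem_span_singleton_self y)
  have hc : c ≠ 0 := by
    rintro rfl
    rw [zero_smul, span_singleton_eq_bot.mpr rfl, span_singleton_eq_bot] at h
    exact hx h
  rw [inner_smul_right]
  exact mul_ne_zero hc (inner_self_ne_zero.mpr hx)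

namespace Qubit

lemma inner_eq (x y : Qubit) :
    ⟪x, y⟫_ℂ = starRingEnd ℂ (x 0) * y 0 + starRingEnd ℂ (x 1) * y 1 := by
  simp [PiLp.inner_apply, Fin.sum_univ_two, mul_comm]

def perp (u : Qubit) : Qubit := !₂[-starRingEnd ℂ (u 1), starRingEnd ℂ (u 0)]

lemma inner_perp_right (u : Qubit) : ⟪u, perp u⟫_ℂ = 0 := by
  simp [inner_eq, perp]; ring

lemma norm_perp (u : Qubit) : ‖perp u‖ = ‖u‖ := by
  simp [EuclideanSpace.norm_eq, Fin.sum_univ_two, perp, add_comm]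

lemma perp_ne_zero {u : Qubit} (hu : u ≠ 0) : perp u ≠ 0 := by
  rw [← norm_ne_zero_iff, norm_perp, norm_ne_zero_iff]; exact hu

lemma inner_self_smul_eq_inner_perp_smul_perp {b u : Qubit} (h : ⟪b, u⟫_ℂ = 0) :
    ⟪b, b⟫_ℂ • u = ⟪perp b, u⟫_ℂ • perp b := by
  rw [inner_eq] at h
  rw [inner_eq b b, inner_eq (perp b) u]
  ext i
  fin_cases i
  · simp [perp]; linear_combination b 0 * h
  · simp [perp]; linear_combination b 1 * h

lemma span_eq_span_perp_of_inner_eq_zero {b u : Qubit} (hb : b ≠ 0) (hu : u ≠ 0)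
    (h : ⟪b, u⟫_ℂ = 0) : ℂ ∙ u = ℂ ∙ perp b := by
  have hbb : IsUnit ⟪b, b⟫_ℂ := (inner_self_ne_zero.mpr hb).isUnit
  have hc : IsUnit ⟪perp b, u⟫_ℂ := by
    refine (ne_of_apply_ne (· • perp b) ?_).isUnit
    rw [← inner_self_smul_eq_inner_perp_smul_perp h, zero_smul]
    exact smul_ne_zero hbb.ne_zero hu
  rw [← span_singleton_smul_eq hbb, inner_self_smul_eq_inner_perp_smul_perp h,
    span_singleton_smul_eq hc]

def basisLines (u : Qubit) : Set (Submodule ℂ Qubit) := {ℂ ∙ u, ℂ ∙ perp u}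

lemma basisLines_eq_of_inner_eq_zero {u w : Qubit} (hu : u ≠ 0) (hw : w ≠ 0)
    (h : ⟪u, w⟫_ℂ = 0) : basisLines u = basisLines w := by
  have h' : ⟪w, u⟫_ℂ = 0 := by rw [← inner_conj_symm, h, map_zero]
  rw [basisLines, basisLines, span_eq_span_perp_of_inner_eq_zero hu hw h,
    span_eq_span_perp_of_inner_eq_zero hw hu h', Set.pair_comm]

def basisOf (u : Qubit) : Fin 2 → Qubit := ![normalize u, normalize (perp u)]

lemma orthonormal_basisOf {u : Qubit} (hu : u ≠ 0) : Orthonormal ℂ (basisOf u) := by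
  simp [basisOf, hu, perp_ne_zero hu, inner_normalize_eq_zero (inner_perp_right u)]

lemma exists_span_basisOf_eq {u v : Qubit} (h : basisLines u = basisLines v) :
    ∃ a, ℂ ∙ basisOf v a = ℂ ∙ u := by
  have hu : ℂ ∙ u ∈ basisLines v := h ▸ Set.mem_insert _ _
  rcases hu with h0 | h1
  · exact ⟨0, by simp [basisOf, span_normalize, h0]⟩
  · exact ⟨1, by simp [basisOf, span_normalize, Set.mem_singleton_iff.mp h1]⟩

theorem exists_measurements {ι : Type*} [Finite ι] (u : ι → Qubit) (hu : ∀ s, u s ≠ 0) :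
    ∃ (m : ℕ) (φ : Fin m → Fin 2 → Qubit) (x : ι → Fin m) (a : ι → Fin 2),
      (∀ j, Orthonormal ℂ (φ j)) ∧ (∀ s, φ (x s) (a s) ∈ ℂ ∙ u s) ∧
      ∀ s s', ⟪u s, u s'⟫_ℂ = 0 → x s = x s' ∧ a s ≠ a s' := by
  let Q := Quotient (Setoid.ker (basisLines ∘ u))
  let e : Q ≃ Fin (Nat.card Q) := Finite.equivFin Q
  choose a ha using fun s =>
    exists_span_basisOf_eq (Setoid.ker_apply_mk_out (f := basisLines ∘ u) s).symm
  refine ⟨Nat.card Q, fun j => basisOf (u (e.symm j).out), fun s => e ⟦s⟧, a,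
    fun j => orthonormal_basisOf (hu _), fun s => ?_, fun s s' h => ?_⟩
  · simp only [Equiv.symm_apply_apply, ← ha s]
    exact mem_span_singleton_self _
  · have hq : (⟦s⟧ : Q) = ⟦s'⟧ :=
      Quotient.sound (basisLines_eq_of_inner_eq_zero (hu s) (hu s') h)
    refine ⟨congrArg e hq, fun has => inner_ne_zero_of_span_singleton_eq (hu s) ?_ h⟩
    rw [← ha s, ← ha s', has, hq]

end Qubit

lemma inner_tens {n : ℕ} (ψ χ : Fin n → Qubit) :
    ⟪tens ψ, tens χ⟫_ℂ = ∏ j, ⟪ψ j, χ j⟫_ℂ := by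
  simp only [tens, PiLp.inner_apply, RCLike.inner_apply, map_prod, ← prod_mul_distrib]
  exact (Fintype.prod_sum fun j a => χ j a * starRingEnd ℂ (ψ j a)).symm

lemma norm_tens {n : ℕ} (ψ : Fin n → Qubit) : ‖tens ψ‖ = ∏ j, ‖ψ j‖ := by
  have h := inner_tens ψ ψ
  simp only [inner_self_eq_norm_sq_to_K] at h
  norm_cast at h
  rw [prod_pow] at h
  exact (pow_left_inj₀ (norm_nonneg _) (prod_nonneg fun j _ => norm_nonneg _) two_ne_zero).mp h

lemma tens_smul {n : ℕ} (c : Fin n → ℂ) (ψ : Fin n → Qubit) :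
    tens (fun j => c j • ψ j) = (∏ j, c j) • tens ψ := by
  ext f
  simp [tens, prod_mul_distrib]

lemma inner_smul_map_smul_of_norm_eq_one {V : Type*} [NormedAddCommGroup V]
    [InnerProductSpace ℂ V] (T : V →ₗ[ℂ] V) {c : ℂ} (hc : ‖c‖ = 1) (u : V) :
    ⟪c • u, T (c • u)⟫_ℂ = ⟪u, T u⟫_ℂ := by
  rw [map_smul, inner_smul_left, inner_smul_right, ← mul_assoc, RCLike.conj_mul, hc]
  simp

lemma inner_tens_map_tens_of_mem_span {n : ℕ} (T : NQubit n →ₗ[ℂ] NQubit n)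
    {φ ψ : Fin n → Qubit} (hφ : ∀ r, ‖φ r‖ = 1) (hψ : ‖tens ψ‖ = 1)
    (h : ∀ r, φ r ∈ ℂ ∙ ψ r) : ⟪tens φ, T (tens φ)⟫_ℂ = ⟪tens ψ, T (tens ψ)⟫_ℂ := by
  choose c hc using fun r => mem_span_singleton.mp (h r)
  have hφc : tens φ = (∏ r, c r) • tens ψ := by
    rw [← tens_smul]
    simp only [hc]
  have hc1 : ‖∏ r, c r‖ = 1 := by
    have h1 := norm_tens φ
    rwa [hφc, norm_smul, hψ, mul_one, prod_eq_one fun r _ => hφ r] at h1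
  rw [hφc, inner_smul_map_smul_of_norm_eq_one T hc1]

lemma trace_eq_sum_of_isONBasis {H : Type*} [NormedAddCommGroup H] [InnerProductSpace ℂ H]
    (T : H →ₗ[ℂ] H) {B : Finset H} (hB : IsONBasis B) :
    LinearMap.trace ℂ H T = ∑ v ∈ B, ⟪v, T v⟫_ℂ := by
  rw [T.trace_eq_sum_inner (OrthonormalBasis.mk hB.1 (by simp [hB.2])), ← sum_coe_sort B]
  simp

lemma mul_eq_zero_of_ne_of_add_eq_one {f : Fin 2 → ℝ} (h01 : ∀ a, f a = 0 ∨ f a = 1)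
    (h : f 0 + f 1 = 1) {a b : Fin 2} (hab : a ≠ b) : f a * f b = 0 := by
  have h01' : f 0 * f 1 = 0 := by
    rcases h01 0 with h0 | h0
    · simp [h0]
    · rw [h0] at h ⊢; linarith
  fin_cases a <;> fin_cases b <;> simp_all [mul_comm]

lemma prod_mul_prod_eq_zero_of_ne {ι : Type*} [Fintype ι] {X : ι → Type*}
    {d : ∀ r, X r → Fin 2 → ℝ} (hd01 : ∀ r x a, d r x a = 0 ∨ d r x a = 1)
    (hd : ∀ r x, d r x 0 + d r x 1 = 1) {x x' : ∀ r, X r} {a a' : ι → Fin 2} {r : ι}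
    (hx : x r = x' r) (ha : a r ≠ a' r) :
    (∏ r, d r (x r) (a r)) * ∏ r, d r (x' r) (a' r) = 0 := by
  rw [← prod_mul_distrib]
  refine prod_eq_zero (mem_univ r) ?_
  rw [hx]
  exact mul_eq_zero_of_ne_of_add_eq_one (hd01 r _) (hd r _) ha

lemma prod_eq_zero_or_one {ι : Type*} {s : Finset ι} {f : ι → ℝ}
    (h : ∀ i ∈ s, f i = 0 ∨ f i = 1) : ∏ i ∈ s, f i = 0 ∨ ∏ i ∈ s, f i = 1 :=
  prod_induction f (fun t => t = 0 ∨ t = 1)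
    (by rintro _ _ (rfl | rfl) (rfl | rfl) <;> simp) (Or.inr rfl) h

lemma sum_le_one_of_mul_eq_zero {α : Type*} {s : Finset α} {f : α → ℝ}
    (h01 : ∀ a ∈ s, f a = 0 ∨ f a = 1) (h : ∀ a ∈ s, ∀ b ∈ s, a ≠ b → f a * f b = 0) :
    ∑ a ∈ s, f a ≤ 1 := by
  by_cases hex : ∃ a ∈ s, f a = 1
  · obtain ⟨a, ha, hfa⟩ := hex
    rw [sum_eq_single_of_mem a ha fun b hb hba => by simpa [hfa] using h b hb a ha hba, hfa]
  · push Not at hex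
    rw [sum_eq_zero fun a ha => (h01 a ha).resolve_right (hex a ha)]
    exact zero_le_one

lemma eq_one_of_sum_mul_eq_one {ι : Type*} [Fintype ι] {w y : ι → ℝ} (hw0 : ∀ i, 0 ≤ w i)
    (hw1 : ∑ i, w i = 1) (hy : ∀ i, y i ≤ 1) (h : ∑ i, w i * y i = 1) {i : ι} (hi : w i ≠ 0) :
    y i = 1 := by
  have h0 : ∑ j, w j * (1 - y j) = 0 := by simp [mul_sub, sum_sub_distrib, hw1, h]
  have h0i := (sum_eq_zero_iff_of_nonneg fun j _ =>
    mul_nonneg (hw0 j) (sub_nonneg.2 (hy j))).1 h0 i (mem_univ i)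
  linarith [(mul_eq_zero.mp h0i).resolve_left hi]

theorem exists_classical_model_of_exclusive {V : Type*} [NormedAddCommGroup V]
    [InnerProductSpace ℂ V] {S : Finset V} {p : V → ℝ}
    (hp : ∀ B : Finset V, ↑B ⊆ (S : Set V) → IsONBasis B → ∑ v ∈ B, p v = 1)
    {k : ℕ} {w : Fin k → ℝ} (hw0 : ∀ i, 0 ≤ w i) (hw1 : ∑ i, w i = 1)
    (c : Fin k → S → ℝ) (hc01 : ∀ i v, c i v = 0 ∨ c i v = 1)
    (hexcl : ∀ i (v v' : S), ⟪(v : V), v'⟫_ℂ = 0 → c i v * c i v' = 0)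
    (hpc : ∀ v : S, p v = ∑ i, w i * c i v) :
    ∃ c' : Fin k → V → ℝ, (∀ i v, c' i v = 0 ∨ c' i v = 1) ∧
      (∀ i, ∀ B : Finset V, ↑B ⊆ (S : Set V) → IsONBasis B → ∑ v ∈ B, c' i v = 1) ∧
      ∀ v ∈ S, p v = ∑ i, w i * c' i v := by
  classical
  let c₀ : Fin k → V → ℝ := fun i v => if h : v ∈ S then c i ⟨v, h⟩ else 0
  have hc₀01 : ∀ i v, c₀ i v = 0 ∨ c₀ i v = 1 := by
    intro i v
    unfold c₀
    split_ifs
    exacts [hc01 _ _, Or.inl rfl]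
  have hbasis : ∀ i, w i ≠ 0 → ∀ B : Finset V, ↑B ⊆ (S : Set V) → IsONBasis B →
      ∑ v ∈ B, c₀ i v = 1 := by
    intro i hi B hBS hB
    have hmem : ∀ v ∈ B, v ∈ S := fun v hv => hBS hv
    refine eq_one_of_sum_mul_eq_one hw0 hw1 (fun j => sum_le_one_of_mul_eq_zero
      (fun v _ => hc₀01 j v) fun v hv v' hv' hne => ?_) ?_ hi
    · have horth : ⟪v, v'⟫_ℂ = 0 :=
        hB.1.2 (show (⟨v, hv⟩ : B) ≠ ⟨v', hv'⟩ from fun h => hne (congrArg Subtype.val h))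
      simpa [c₀, hmem v hv, hmem v' hv'] using hexcl j ⟨v, hmem v hv⟩ ⟨v', hmem v' hv'⟩ horth
    · calc ∑ j, w j * ∑ v ∈ B, c₀ j v = ∑ v ∈ B, ∑ j, w j * c₀ j v := by
            simp only [mul_sum]; exact sum_comm
        _ = ∑ v ∈ B, p v := sum_congr rfl fun v hv => by
          simp only [c₀, dif_pos (hmem v hv)]; exact (hpc _).symm
        _ = 1 := hp B hBS hB
  obtain ⟨i₀, hi₀⟩ : ∃ i, w i ≠ 0 := by
    by_contra! h
    simp [h] at hw1
  -- colourings of weight zero are replaced by a KS colouring `c₀ i₀`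
  refine ⟨fun i => c₀ (if w i = 0 then i₀ else i), fun i v => hc₀01 _ v,
    fun i B hBS hB => hbasis _ (by split_ifs <;> assumption) B hBS hB, fun v hv => ?_⟩
  rw [hpc ⟨v, hv⟩]
  refine sum_congr rfl fun i _ => ?_
  dsimp only
  split_ifs with h
  · simp [h]
  · simp [c₀, hv]

theorem statistical_KS_implies_Bell_violation_general
    (n : ℕ) (ρ : NQubit n →ₗ[ℂ] NQubit n)
    (htr : LinearMap.trace ℂ (NQubit n) ρ = 1)
    (S : Finset (NQubit n)) (hS : ∀ v ∈ S, IsProduct v ∧ ‖v‖ = 1)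
    (hnc : ¬ ∃ (k : ℕ) (w : Fin k → ℝ) (c : Fin k → NQubit n → ℝ),
      (∀ i, 0 ≤ w i) ∧ (∑ i, w i = 1) ∧
      (∀ i v, c i v = 0 ∨ c i v = 1) ∧
      (∀ i, ∀ B : Finset (NQubit n), ↑B ⊆ (S : Set (NQubit n)) → IsONBasis B →
        ∑ v ∈ B, c i v = 1) ∧
      (∀ v ∈ S, (⟪v, ρ v⟫_ℂ).re = ∑ i, w i * c i v)) :
    ∃ (X : Fin n → ℕ) (φ : (r : Fin n) → Fin (X r) → Fin 2 → Qubit),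
      (∀ r x, ‖φ r x 0‖ = 1 ∧ ‖φ r x 1‖ = 1 ∧ ⟪φ r x 0, φ r x 1⟫_ℂ = 0) ∧
      ¬ ∃ (k : ℕ) (w : Fin k → ℝ)
          (d : Fin k → (r : Fin n) → Fin (X r) → Fin 2 → ℝ),
        (∀ i, 0 ≤ w i) ∧ (∑ i, w i = 1) ∧
        (∀ i r x a, d i r x a = 0 ∨ d i r x a = 1) ∧
        (∀ i r x, d i r x 0 + d i r x 1 = 1) ∧
        (∀ (a : Fin n → Fin 2) (x : (r : Fin n) → Fin (X r)),
          (⟪tens (fun r => φ r (x r) (a r)), ρ (tens (fun r => φ r (x r) (a r)))⟫_ℂ).re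
            = ∑ i, w i * ∏ r, d i r (x r) (a r)) := by
  choose ψ hψ using fun v : S => (hS v v.2).1
  have hψ1 : ∀ v, ‖tens (ψ v)‖ = 1 := fun v => hψ v ▸ (hS v v.2).2
  have hψ0 : ∀ v r, ψ v r ≠ 0 := fun v r => norm_ne_zero_iff.mp <|
    prod_ne_zero_iff.mp (norm_tens (ψ v) ▸ hψ1 v ▸ one_ne_zero) r (mem_univ r)
  choose X φ x a hφ hφψ hxa using fun r =>
    Qubit.exists_measurements (fun v : S => ψ v r) (fun v => hψ0 v r)
  refine ⟨X, φ, fun r j => ⟨(hφ r j).1 0, (hφ r j).1 1, (hφ r j).2 zero_ne_one⟩, ?_⟩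
  rintro ⟨k, w, d, hw0, hw1, hd01, hd, hbeh⟩
  have hprob : ∀ v : S,
      (⟪(v : NQubit n), ρ v⟫_ℂ).re = ∑ i, w i * ∏ r, d i r (x r v) (a r v) := by
    intro v
    rw [← hbeh (fun r => a r v) (fun r => x r v), hψ v, inner_tens_map_tens_of_mem_span ρ
      (fun r => (hφ r _).1 _) (hψ1 v) (fun r => hφψ r v)]
  have hexcl : ∀ i (v v' : S), ⟪(v : NQubit n), v'⟫_ℂ = 0 →
      (∏ r, d i r (x r v) (a r v)) * ∏ r, d i r (x r v') (a r v') = 0 := by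
    intro i v v' h
    rw [hψ v, hψ v', inner_tens, prod_eq_zero_iff] at h
    obtain ⟨r, -, hr⟩ := h
    exact prod_mul_prod_eq_zero_of_ne (hd01 i) (hd i) (hxa r v v' hr).1 (hxa r v v' hr).2
  have hnorm : ∀ B : Finset (NQubit n), IsONBasis B → ∑ v ∈ B, (⟪v, ρ v⟫_ℂ).re = 1 := by
    intro B hB
    rw [← Complex.re_sum, ← trace_eq_sum_of_isONBasis ρ hB, htr, Complex.one_re]
  obtain ⟨c, hc01, hcB, hpc⟩ := exists_classical_model_of_exclusive (fun B _ => hnorm B)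
    hw0 hw1 _ (fun i v => prod_eq_zero_or_one fun r _ => hd01 i r _ _) hexcl hprob
  exact hnc ⟨k, w, c, hw0, hw1, hc01, hcB, hpc⟩

/-- statistical KS proofs with unentangled measurements imply Bell
violation: let `ρ` be a density operator on `(ℂ²)^{⊗n}` (self-adjoint, positive
semidefinite, trace one) and `S` a finite set of product unit vectors such that the
probabilistic model `ψ ↦ ⟨ψ, ρ ψ⟩` on `S` is not a convex combination of `{0,1}`-valued
maps summing to `1` on every orthonormal basis contained in `S`.  Then `ρ` violates a
Bell inequality with local projective measurements: there are finitely many single-qubit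
orthonormal-basis measurements `φ r x` for each party `r` such that the behaviour
`p(a|x) = ⟨⊗ᵣ φ r (x r) (a r), ρ (⊗ᵣ φ r (x r) (a r))⟩` is not in the convex hull of the
local deterministic behaviours. -/
theorem statistical_KS_implies_Bell_violation
    (n : ℕ) (ρ : NQubit n →ₗ[ℂ] NQubit n)
    (hsym : ∀ x y : NQubit n, ⟪ρ x, y⟫_ℂ = ⟪x, ρ y⟫_ℂ)
    (hpos : ∀ x : NQubit n, 0 ≤ (⟪x, ρ x⟫_ℂ).re)
    (htr : LinearMap.trace ℂ (NQubit n) ρ = 1)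
    (S : Finset (NQubit n)) (hS : ∀ v ∈ S, IsProduct v ∧ ‖v‖ = 1)
    (hnc : ¬ ∃ (k : ℕ) (w : Fin k → ℝ) (c : Fin k → NQubit n → ℝ),
      (∀ i, 0 ≤ w i) ∧ (∑ i, w i = 1) ∧
      (∀ i v, c i v = 0 ∨ c i v = 1) ∧
      (∀ i, ∀ B : Finset (NQubit n), ↑B ⊆ (S : Set (NQubit n)) → IsONBasis B →
        ∑ v ∈ B, c i v = 1) ∧
      (∀ v ∈ S, (⟪v, ρ v⟫_ℂ).re = ∑ i, w i * c i v)) :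
    ∃ (X : Fin n → ℕ) (φ : (r : Fin n) → Fin (X r) → Fin 2 → Qubit),
      (∀ r x, ‖φ r x 0‖ = 1 ∧ ‖φ r x 1‖ = 1 ∧ ⟪φ r x 0, φ r x 1⟫_ℂ = 0) ∧
      ¬ ∃ (k : ℕ) (w : Fin k → ℝ)
          (d : Fin k → (r : Fin n) → Fin (X r) → Fin 2 → ℝ),
        (∀ i, 0 ≤ w i) ∧ (∑ i, w i = 1) ∧
        (∀ i r x a, d i r x a = 0 ∨ d i r x a = 1) ∧
        (∀ i r x, d i r x 0 + d i r x 1 = 1) ∧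
        (∀ (a : Fin n → Fin 2) (x : (r : Fin n) → Fin (X r)),
          (⟪tens (fun r => φ r (x r) (a r)), ρ (tens (fun r => φ r (x r) (a r)))⟫_ℂ).re
            = ∑ i, w i * ∏ r, d i r (x r) (a r)) :=
  statistical_KS_implies_Bell_violation_general n ρ htr S hS hnc
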